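/- arXiv:2310.11519 — 2 statements merged into one kernel-verified Lean document; each statement's English description precedes it below -/
import Mathlib

section
/- Let A be the 2-dimensional associative algebra over ℝ with basis {e₁, n₁} and multiplication e₁e₁ = e₁, e₁n₁ = n₁, and all other basis products zero (in particular n₁e₁ = 0, n₁n₁ = 0). Then A is associative, e₁ is an idempotent, n₁ spans a nilpotent ideal N with N² = 0, and for every x ∈ A the inner quadratic annihilator {a ∈ A : xax = 0} intersected with {s² : s ∈ ℝe₁} ∪ {n² : n ∈ N} equals eAe intersected with the same set for some idempotent e ∈ {0, e₁}. -/
/-!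
In coordinates `x = α e₁ + β n₁` the product is `x * (c e₁ + d n₁) = α c e₁ + α d n₁`, so
`n₁` annihilates everything from the left and every element of `S² ∪ N²` is a multiple
`c e₁` (as `N² = 0`). If `α = 0` then `x` annihilates everything from the left, so the inner
annihilator contains `S² ∪ N²`, which lies in `e₁ A e₁`. If `α ≠ 0` then
`x (c e₁) x = c α² e₁ + c α β n₁` vanishes only for `c = 0`, matching `0 A 0 = {0}`.
-/

section SpanSingleton

variable {K A : Type*} [CommSemiring K] [NonUnitalNonAssocSemiring A] [Module K A]
  [SMulCommClass K A A] [IsScalarTower K A A]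

theorem mul_eq_zero_of_mem_span_singleton {n₀ m n : A} (h : n₀ * n₀ = 0)
    (hm : m ∈ K ∙ n₀) (hn : n ∈ K ∙ n₀) : m * n = 0 := by
  obtain ⟨a, rfl⟩ := Submodule.mem_span_singleton.mp hm
  obtain ⟨b, rfl⟩ := Submodule.mem_span_singleton.mp hn
  rw [smul_mul_smul_comm, h, smul_zero]

theorem IsIdempotentElem.mul_mem_span_singleton {e s t : A} (he : IsIdempotentElem e)
    (hs : s ∈ K ∙ e) (ht : t ∈ K ∙ e) : s * t ∈ K ∙ e := by
  obtain ⟨a, rfl⟩ := Submodule.mem_span_singleton.mp hs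
  obtain ⟨b, rfl⟩ := Submodule.mem_span_singleton.mp ht
  rw [smul_mul_smul_comm, he.eq]
  exact Submodule.smul_mem _ _ (Submodule.mem_span_singleton_self e)

theorem IsIdempotentElem.mul_mul_self_of_mem_span_singleton {e y : A}
    (he : IsIdempotentElem e) (hy : y ∈ K ∙ e) : e * y * e = y := by
  obtain ⟨c, rfl⟩ := Submodule.mem_span_singleton.mp hy
  rw [mul_smul_comm, he.eq, smul_mul_assoc, he.eq]

end SpanSingleton

/-- The multiplication table of the algebra `𝒜₂²` on the pair `(e, n)`. -/
structure IsA22Pair {A : Type*} [Mul A] [Zero A] (e n : A) : Prop where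
  mul_self_left : e * e = e
  left_mul_right : e * n = n
  right_mul_left : n * e = 0
  mul_self_right : n * n = 0

namespace IsA22Pair

section Semiring

variable {K A : Type*} [CommSemiring K] [NonUnitalNonAssocSemiring A] [Module K A]
  [IsScalarTower K A A] {e n : A}

theorem smul_add_smul_mul_left (h : IsA22Pair e n) (a b : K) :
    (a • e + b • n) * e = a • e := by
  rw [add_mul, smul_mul_assoc, smul_mul_assoc, h.mul_self_left, h.right_mul_left, smul_zero,
    add_zero]

theorem smul_add_smul_mul_right (h : IsA22Pair e n) (a b : K) :
    (a • e + b • n) * n = a • n := by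
  rw [add_mul, smul_mul_assoc, smul_mul_assoc, h.left_mul_right, h.mul_self_right, smul_zero,
    add_zero]

variable [SMulCommClass K A A]

theorem smul_add_smul_mul_smul_add_smul (h : IsA22Pair e n) (a b c d : K) :
    (a • e + b • n) * (c • e + d • n) = (a * c) • e + (a * d) • n := by
  rw [mul_add, mul_smul_comm, mul_smul_comm, h.smul_add_smul_mul_left,
    h.smul_add_smul_mul_right, smul_smul, smul_smul, mul_comm c, mul_comm d]

theorem left_mul_smul_add_smul (h : IsA22Pair e n) (c d : K) :
    e * (c • e + d • n) = c • e + d • n := by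
  simpa using h.smul_add_smul_mul_smul_add_smul (1 : K) 0 c d

theorem right_mul_smul_add_smul (h : IsA22Pair e n) (c d : K) :
    n * (c • e + d • n) = 0 := by
  simpa using h.smul_add_smul_mul_smul_add_smul (0 : K) 1 c d

theorem smul_add_smul_mul_mem_span_right (h : IsA22Pair e n) (a b : K) {m : A}
    (hm : m ∈ K ∙ n) : (a • e + b • n) * m ∈ K ∙ n := by
  obtain ⟨c, rfl⟩ := Submodule.mem_span_singleton.mp hm
  rw [mul_smul_comm, h.smul_add_smul_mul_right]
  exact Submodule.smul_mem _ _ (Submodule.smul_mem _ _ (Submodule.mem_span_singleton_self n))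

theorem mul_smul_add_smul_eq_zero_of_mem_span_right (h : IsA22Pair e n) {m : A}
    (hm : m ∈ K ∙ n) (c d : K) : m * (c • e + d • n) = 0 := by
  obtain ⟨a, rfl⟩ := Submodule.mem_span_singleton.mp hm
  rw [smul_mul_assoc, h.right_mul_smul_add_smul, smul_zero]

theorem mul_smul_mul (h : IsA22Pair e n) (α β c : K) :
    (α • e + β • n) * (c • e) * (α • e + β • n) = (c * α * α) • e + (c * α * β) • n := by
  rw [mul_smul_comm, h.smul_add_smul_mul_left, smul_smul, smul_mul_assoc,
    h.left_mul_smul_add_smul, smul_add, smul_smul, smul_smul]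

end Semiring

theorem mul_smul_mul_eq_zero_iff {K A : Type*} [CommRing K] [NoZeroDivisors K]
    [NonUnitalNonAssocRing A] [Module K A] [SMulCommClass K A A] [IsScalarTower K A A]
    {e n : A} (h : IsA22Pair e n) (hind : LinearIndependent K ![e, n]) {α : K} (hα : α ≠ 0)
    (β c : K) : (α • e + β • n) * (c • e) * (α • e + β • n) = 0 ↔ c = 0 := by
  rw [h.mul_smul_mul]
  refine ⟨fun h0 => ?_, fun hc => by simp [hc]⟩
  simpa [hα] using (LinearIndependent.pair_iff.mp hind _ _ h0).1

end IsA22Pair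

/-- The 2-dimensional real algebra with basis `{e₁, n₁}` and
multiplication `e₁e₁ = e₁`, `e₁n₁ = n₁`, `n₁e₁ = 0`, `n₁n₁ = 0` is an almost inner
Rickart algebra: `e₁` is idempotent, `N = ℝn₁` is a nilpotent ideal with `N·N = 0`,
and for every `x` the inner quadratic annihilator of `{x}` intersected with
`S² ∪ N²` equals `eAe ∩ (S² ∪ N²)` for some idempotent `e ∈ {0, e₁}`. -/
theorem stmt14 {A : Type*} [NonUnitalRing A] [Module ℝ A]
    [SMulCommClass ℝ A A] [IsScalarTower ℝ A A]
    (e₁ n₁ : A)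
    (hind : LinearIndependent ℝ ![e₁, n₁])
    (hspan : Submodule.span ℝ {e₁, n₁} = ⊤)
    (hee : e₁ * e₁ = e₁) (hen : e₁ * n₁ = n₁)
    (hne : n₁ * e₁ = 0) (hnn : n₁ * n₁ = 0) :
    e₁ * e₁ = e₁ ∧
    (∀ x : A, ∀ n ∈ Submodule.span ℝ {n₁},
      x * n ∈ Submodule.span ℝ {n₁} ∧ n * x ∈ Submodule.span ℝ {n₁}) ∧
    (∀ m ∈ Submodule.span ℝ {n₁}, ∀ n ∈ Submodule.span ℝ {n₁}, m * n = 0) ∧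
    (∀ x : A, ∃ e : A, (e = 0 ∨ e = e₁) ∧ e * e = e ∧
      {a : A | x * a * x = 0} ∩
        ({y : A | ∃ s ∈ Submodule.span ℝ {e₁}, y = s * s} ∪
         {y : A | ∃ n ∈ Submodule.span ℝ {n₁}, y = n * n}) =
      {y : A | ∃ z : A, y = e * z * e} ∩
        ({y : A | ∃ s ∈ Submodule.span ℝ {e₁}, y = s * s} ∪
         {y : A | ∃ n ∈ Submodule.span ℝ {n₁}, y = n * n})) := by
  have table : IsA22Pair e₁ n₁ := ⟨hee, hen, hne, hnn⟩
  have coords : ∀ x : A, ∃ α β : ℝ, α • e₁ + β • n₁ = x := fun x =>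
    Submodule.mem_span_pair.mp (hspan ▸ Submodule.mem_top)
  have squares_mem_span : ∀ y ∈ {y : A | ∃ s ∈ Submodule.span ℝ {e₁}, y = s * s} ∪
      {y : A | ∃ n ∈ Submodule.span ℝ {n₁}, y = n * n}, y ∈ ℝ ∙ e₁ := by
    rintro y (⟨s, hs, rfl⟩ | ⟨m, hm, rfl⟩)
    · exact IsIdempotentElem.mul_mem_span_singleton hee hs hs
    · simp [mul_eq_zero_of_mem_span_singleton hnn hm hm]
  refine ⟨hee, fun x m hm => ?_, fun m hm n hn => mul_eq_zero_of_mem_span_singleton hnn hm hn,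
    fun x => ?_⟩ <;> obtain ⟨α, β, rfl⟩ := coords x
  · refine ⟨table.smul_add_smul_mul_mem_span_right α β hm, ?_⟩
    simp [table.mul_smul_add_smul_eq_zero_of_mem_span_right hm]
  by_cases hα : α = 0
  · refine ⟨e₁, Or.inr rfl, hee, Set.ext fun y => and_congr_left fun hy => ?_⟩
    have hy' := squares_mem_span y hy
    refine iff_of_true ?_ ⟨y, (IsIdempotentElem.mul_mul_self_of_mem_span_singleton hee hy').symm⟩
    obtain ⟨c, rfl⟩ := Submodule.mem_span_singleton.mp hy'
    rw [Set.mem_ofPred_eq, table.mul_smul_mul, hα]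
    simp
  · refine ⟨0, Or.inl rfl, mul_zero 0, Set.ext fun y => and_congr_left fun hy => ?_⟩
    obtain ⟨c, rfl⟩ := Submodule.mem_span_singleton.mp (squares_mem_span y hy)
    simp only [Set.mem_ofPred_eq, table.mul_smul_mul_eq_zero_iff hind hα, mul_zero, zero_mul,
      exists_const]
    exact (smul_eq_zero_iff_left (by simpa using hind.ne_zero 0)).symm
end

section
/- Let A be the (n+1)-dimensional commutative associative algebra over a field F of characteristic ≠ 2 with basis {e, e₁, …, eₙ} and multiplication ee = e, eeᵢ = eᵢe = eᵢ, eᵢeⱼ = 0 for all i, j. Then A is associative and commutative, e is its unit, N = span{e₁,…,eₙ} is an ideal with N² = 0, and for every x ∈ A there is an idempotent f ∈ {0, e} with {a ∈ A : xax = 0} ∩ ({s² : s ∈ Fe} ∪ {n² : n ∈ N}) = fAf ∩ ({s² : s ∈ Fe} ∪ {n² : n ∈ N}). -/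
/-!
Write `N` for the span of the `εᵢ`. Then `A = F e + N`, where `e` acts as the identity on `N` and
`N² = 0`, so `(c e + m)(c' e + m') = c c' e + c m' + c' m`. Every `x = c e + m` with
`c ≠ 0` is invertible, with inverse `c⁻¹ e - c⁻² m`, so `x a x = 0` forces `a = 0` and `f = 0`
works. Every `x ∈ N` satisfies `x a x ∈ N² = 0` for all `a`, and `f = e` works.
-/

open Submodule

theorem Submodule.mul_eq_zero_of_mem_span {F A : Type*} [CommSemiring F]
    [NonUnitalNonAssocSemiring A] [Module F A] [SMulCommClass F A A] [IsScalarTower F A A]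
    {s t : Set A} (hst : ∀ x ∈ s, ∀ y ∈ t, x * y = 0) {x y : A}
    (hx : x ∈ span F s) (hy : y ∈ span F t) : x * y = 0 := by
  have hbot : map₂ (LinearMap.mul F A) (span F s) (span F t) = ⊥ := by
    rw [map₂_span_span, span_eq_bot]
    rintro _ ⟨x, hx, y, hy, rfl⟩
    exact hst x hx y hy
  simpa [hbot] using apply_mem_map₂ (LinearMap.mul F A) hx hy

/-- `A = F e + N` is a quotient of `TrivSqZeroExt F N`, with `e` the image of the unit. -/
structure IsTrivSqZeroExt (F : Type*) {A : Type*} [Semiring F] [NonUnitalNonAssocSemiring A]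
    [Module F A] (e : A) (N : Submodule F A) : Prop where
  mul_self : e * e = e
  left_unit_of_mem : ∀ m ∈ N, e * m = m
  right_unit_of_mem : ∀ m ∈ N, m * e = m
  mul_eq_zero_of_mem : ∀ m ∈ N, ∀ m' ∈ N, m * m' = 0
  sup_eq_top : (F ∙ e) ⊔ N = ⊤

namespace IsTrivSqZeroExt

section CommSemiring

variable {F A : Type*} [CommSemiring F] [NonUnitalSemiring A] [Module F A] {e : A}
  {N : Submodule F A}

theorem exists_eq_smul_add (h : IsTrivSqZeroExt F e N) (x : A) :
    ∃ c : F, ∃ m ∈ N, x = c • e + m := by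
  obtain ⟨_, he, m, hm, rfl⟩ := mem_sup.mp (h.sup_eq_top ▸ mem_top : x ∈ (F ∙ e) ⊔ N)
  obtain ⟨c, rfl⟩ := mem_span_singleton.mp he
  exact ⟨c, m, hm, rfl⟩

variable [SMulCommClass F A A] [IsScalarTower F A A]

theorem of_span_insert {s : Set A} (hspan : span F (insert e s) = ⊤) (hee : e * e = e)
    (hes : ∀ x ∈ s, e * x = x ∧ x * e = x) (hss : ∀ x ∈ s, ∀ y ∈ s, x * y = 0) :
    IsTrivSqZeroExt F e (span F s) where
  mul_self := hee
  left_unit_of_mem := LinearMap.eqOn_span' (f := LinearMap.mulLeft F e) (g := LinearMap.id)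
    fun x hx => (hes x hx).1
  right_unit_of_mem := LinearMap.eqOn_span' (f := LinearMap.mulRight F e) (g := LinearMap.id)
    fun x hx => (hes x hx).2
  mul_eq_zero_of_mem _ hm _ hm' := mul_eq_zero_of_mem_span hss hm hm'
  sup_eq_top := by rw [← span_insert, hspan]

variable (h : IsTrivSqZeroExt F e N)
include h

theorem smul_add_mul_smul_add {c c' : F} {m m' : A} (hm : m ∈ N) (hm' : m' ∈ N) :
    (c • e + m) * (c' • e + m') = (c * c') • e + (c • m' + c' • m) := by
  rw [add_mul, mul_add, mul_add, smul_mul_assoc, smul_mul_assoc, mul_smul_comm, mul_smul_comm,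
    h.mul_self, h.left_unit_of_mem m' hm', h.right_unit_of_mem m hm,
    h.mul_eq_zero_of_mem m hm m' hm', smul_smul, add_zero]
  abel

theorem commute (x y : A) : Commute x y := by
  obtain ⟨c, m, hm, rfl⟩ := h.exists_eq_smul_add x
  obtain ⟨c', m', hm', rfl⟩ := h.exists_eq_smul_add y
  rw [Commute, SemiconjBy, h.smul_add_mul_smul_add hm hm', h.smul_add_mul_smul_add hm' hm,
    mul_comm c, add_comm (c • m')]

omit [IsScalarTower F A A] in
theorem left_unit (x : A) : e * x = x := by
  obtain ⟨c, m, hm, rfl⟩ := h.exists_eq_smul_add x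
  rw [mul_add, mul_smul_comm, h.mul_self, h.left_unit_of_mem m hm]

theorem right_unit (x : A) : x * e = x :=
  (h.commute x e).eq.trans (h.left_unit x)

omit [SMulCommClass F A A] in
theorem mul_mem_left (x : A) {m : A} (hm : m ∈ N) : x * m ∈ N := by
  obtain ⟨c, m₀, hm₀, rfl⟩ := h.exists_eq_smul_add x
  rw [add_mul, smul_mul_assoc, h.left_unit_of_mem m hm, h.mul_eq_zero_of_mem m₀ hm₀ m hm,
    add_zero]
  exact N.smul_mem c hm

theorem mul_mem_right (x : A) {m : A} (hm : m ∈ N) : m * x ∈ N :=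
  (h.commute m x).eq ▸ h.mul_mem_left x hm

theorem mul_mul_self_eq_zero_of_mem {x : A} (hx : x ∈ N) (a : A) : x * a * x = 0 :=
  h.mul_eq_zero_of_mem _ (h.mul_mem_right a hx) x hx

end CommSemiring

section Field

variable {F A : Type*} [Field F] [NonUnitalRing A] [Module F A]
  [SMulCommClass F A A] [IsScalarTower F A A] {e : A} {N : Submodule F A}
  (h : IsTrivSqZeroExt F e N)
include h

theorem exists_mul_eq_of_notMem {x : A} (hx : x ∉ N) : ∃ y, y * x = e ∧ x * y = e := by
  obtain ⟨c, m, hm, rfl⟩ := h.exists_eq_smul_add x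
  have hc : c ≠ 0 := by
    rintro rfl
    exact hx (by rwa [zero_smul, zero_add])
  have hcoeff : c * -(c⁻¹ * c⁻¹) = -c⁻¹ := by field_simp
  refine ⟨c⁻¹ • e + (-(c⁻¹ * c⁻¹)) • m, ?_, (h.commute _ _).eq.symm.trans ?_⟩ <;>
  · rw [h.smul_add_mul_smul_add (N.smul_mem _ hm) hm, inv_mul_cancel₀ hc, one_smul, smul_smul,
      hcoeff, neg_smul, add_neg_cancel, add_zero]

theorem eq_zero_of_mul_mul_self_eq_zero {x a : A} (hx : x ∉ N) (ha : x * a * x = 0) : a = 0 := by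
  obtain ⟨y, hyx, hxy⟩ := h.exists_mul_eq_of_notMem hx
  calc a = (y * x) * a * (x * y) := by rw [hyx, hxy, h.left_unit, h.right_unit]
    _ = y * (x * a * x) * y := by simp only [mul_assoc]
    _ = 0 := by rw [ha, mul_zero, zero_mul]

theorem exists_idempotent_setOf_mul_mul_eq_zero (x : A) :
    ∃ f : A, (f = 0 ∨ f = e) ∧ f * f = f ∧
      {a : A | x * a * x = 0} = {y | ∃ z, y = f * z * f} := by
  by_cases hx : x ∈ N
  · refine ⟨e, .inr rfl, h.mul_self, Set.ext fun a => ?_⟩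
    simp only [Set.mem_ofPred_eq, h.mul_mul_self_eq_zero_of_mem hx, true_iff]
    exact ⟨a, by rw [h.left_unit, h.right_unit]⟩
  · refine ⟨0, .inl rfl, mul_zero 0, Set.ext fun a => ?_⟩
    simp only [Set.mem_ofPred_eq, zero_mul, mul_zero, exists_const]
    exact ⟨h.eq_zero_of_mul_mul_self_eq_zero hx, fun ha => by rw [ha, mul_zero, zero_mul]⟩

end Field

end IsTrivSqZeroExt

theorem stmt15_general {F A : Type*} [Field F] [NonUnitalRing A] [Module F A]
    [SMulCommClass F A A] [IsScalarTower F A A]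
    (n : ℕ) (e : A) (ε : Fin n → A)
    (hspan : Submodule.span F (Set.range (Fin.cons e ε : Fin (n + 1) → A)) = ⊤)
    (hee : e * e = e)
    (hei : ∀ i, e * ε i = ε i ∧ ε i * e = ε i)
    (hij : ∀ i j, ε i * ε j = 0) :
    (∀ x y : A, x * y = y * x) ∧
    (∀ x : A, e * x = x ∧ x * e = x) ∧
    (∀ x : A, ∀ m ∈ Submodule.span F (Set.range ε),
      x * m ∈ Submodule.span F (Set.range ε) ∧ m * x ∈ Submodule.span F (Set.range ε)) ∧
    (∀ m ∈ Submodule.span F (Set.range ε), ∀ m' ∈ Submodule.span F (Set.range ε),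
      m * m' = 0) ∧
    (∀ x : A, ∃ f : A, (f = 0 ∨ f = e) ∧ f * f = f ∧
      {a : A | x * a * x = 0} ∩
        ({y : A | ∃ s ∈ Submodule.span F {e}, y = s * s} ∪
         {y : A | ∃ m ∈ Submodule.span F (Set.range ε), y = m * m}) =
      {y : A | ∃ z : A, y = f * z * f} ∩
        ({y : A | ∃ s ∈ Submodule.span F {e}, y = s * s} ∪
         {y : A | ∃ m ∈ Submodule.span F (Set.range ε), y = m * m})) := by
  rw [Fin.range_cons] at hspan
  have h := IsTrivSqZeroExt.of_span_insert hspan hee (by rintro _ ⟨i, rfl⟩; exact hei i)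
    (by rintro _ ⟨i, rfl⟩ _ ⟨j, rfl⟩; exact hij i j)
  refine ⟨fun x y => (h.commute x y).eq, fun x => ⟨h.left_unit x, h.right_unit x⟩,
    fun x m hm => ⟨h.mul_mem_left x hm, h.mul_mem_right x hm⟩, h.mul_eq_zero_of_mem,
    fun x => ?_⟩
  obtain ⟨f, hf, hff, hann⟩ := h.exists_idempotent_setOf_mul_mul_eq_zero x
  exact ⟨f, hf, hff, by rw [hann]⟩

/-- The `(n+1)`-dimensional algebra over a field `F` (char ≠ 2) with
basis `{e, e₁, …, eₙ}` and multiplication `ee = e`, `eeᵢ = eᵢe = eᵢ`, `eᵢeⱼ = 0` is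
commutative with unit `e`, `N = span{e₁,…,eₙ}` is an ideal with `N² = 0`, and for
every `x` the inner quadratic annihilator of `{x}` intersected with `S² ∪ N²`
equals `fAf ∩ (S² ∪ N²)` for some idempotent `f ∈ {0, e}`. -/
theorem stmt15 {F A : Type*} [Field F] [NonUnitalRing A] [Module F A]
    [SMulCommClass F A A] [IsScalarTower F A A]
    (h2 : (2 : F) ≠ 0)
    (n : ℕ) (e : A) (ε : Fin n → A)
    (hind : LinearIndependent F (Fin.cons e ε : Fin (n + 1) → A))
    (hspan : Submodule.span F (Set.range (Fin.cons e ε : Fin (n + 1) → A)) = ⊤)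
    (hee : e * e = e)
    (hei : ∀ i, e * ε i = ε i ∧ ε i * e = ε i)
    (hij : ∀ i j, ε i * ε j = 0) :
    (∀ x y : A, x * y = y * x) ∧
    (∀ x : A, e * x = x ∧ x * e = x) ∧
    (∀ x : A, ∀ m ∈ Submodule.span F (Set.range ε),
      x * m ∈ Submodule.span F (Set.range ε) ∧ m * x ∈ Submodule.span F (Set.range ε)) ∧
    (∀ m ∈ Submodule.span F (Set.range ε), ∀ m' ∈ Submodule.span F (Set.range ε),
      m * m' = 0) ∧
    (∀ x : A, ∃ f : A, (f = 0 ∨ f = e) ∧ f * f = f ∧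
      {a : A | x * a * x = 0} ∩
        ({y : A | ∃ s ∈ Submodule.span F {e}, y = s * s} ∪
         {y : A | ∃ m ∈ Submodule.span F (Set.range ε), y = m * m}) =
      {y : A | ∃ z : A, y = f * z * f} ∩
        ({y : A | ∃ s ∈ Submodule.span F {e}, y = s * s} ∪
         {y : A | ∃ m ∈ Submodule.span F (Set.range ε), y = m * m})) :=
  stmt15_general n e ε hspan hee hei hij
end
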